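/- (Proposition 2, convex case.) Let f : ℝⁿ → ℝ be convex and differentiable, let θ* ∈ ℝⁿ be a global minimizer of f, and let θ(t), t = 0, …, T, be generated by the stochastic MTSL iteration from a deterministic initial point θ(0), satisfying for every t ∈ {0,…,T−1}: unbiasedness E[g̃(t) | ℱ_t] = ∇f(θ(t)) almost surely; second-moment bound E[‖g̃(t)‖²] ≤ G²; and the alignment condition that almost surely ∂ᵢf(θ(t)) · (θᵢ(t) − θ*ᵢ) ≥ 0 for every coordinate i. Assume f(θ(t)) and ‖θ(t) − θ*‖² are integrable for all t. Then min_{0 ≤ t ≤ T−1} E[ f(θ(t)) − f(θ*) ] ≤ ( ‖θ(0) − θ*‖² + G² Σ_{t=0}^{T−1} η_max(t)² ) / ( 2 Σ_{t=0}^{T−1} η_min(t) ). -/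

import Mathlib

open MeasureTheory Finset

/-- The `i`-th partial derivative of `f : ℝⁿ → ℝ` at `x`. -/
noncomputable def pderiv' {n : ℕ} (f : (Fin n → ℝ) → ℝ) (i : Fin n) (x : Fin n → ℝ) : ℝ :=
  fderiv ℝ f x (Pi.single i 1)

/-!
Expand `‖θ(t+1) − θ*‖² = ‖θ(t) − θ*‖² − 2 Σᵢ ηᵢ g̃ᵢ (θᵢ − θ*ᵢ) + Σᵢ ηᵢ² g̃ᵢ²`. Since `θ(t)` is
`ℱ_t`-measurable, unbiasedness turns the expected cross term into `E Σᵢ ηᵢ ∂ᵢf(θ)(θᵢ − θ*ᵢ)`;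
the alignment condition makes each summand nonnegative, so this is at least
`η_min E⟨∇f(θ), θ − θ*⟩ ≥ η_min E[f(θ) − f(θ*)]` by convexity, while the last term has expectation
at most `η_max² G²`. Summing the resulting inequality
`E‖θ(t+1) − θ*‖² ≤ E‖θ(t) − θ*‖² − 2 η_min(t) E[f(θ(t)) − f(θ*)] + G² η_max(t)²` over `t < T`
and bounding each `E[f(θ(t)) − f(θ*)]` below by their minimum gives the rate.
-/

theorem ConvexOn.add_fderiv_sub_le {E : Type*} [NormedAddCommGroup E] [NormedSpace ℝ E]
    {s : Set E} {f : E → ℝ} {f' : E →L[ℝ] ℝ} {x y : E} (hf : ConvexOn ℝ s f) (hx : x ∈ s)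
    (hy : y ∈ s) (hf' : HasFDerivAt f f' x) :
    f x + f' (y - x) ≤ f y := by
  let line : ℝ →ᵃ[ℝ] E :=
    (LinearMap.toSpanSingleton ℝ E (y - x)).toAffineMap + AffineMap.const ℝ ℝ x
  have hline : ∀ t : ℝ, line t = t • (y - x) + x := fun t => rfl
  have hderiv : HasDerivAt (f ∘ line) (f' (y - x)) 0 := by
    have hl : HasDerivAt (fun t : ℝ => t • (y - x) + x) (y - x) 0 := by
      simpa using ((hasDerivAt_id (0 : ℝ)).smul_const (y - x)).add_const x
    exact (by simpa [hline] using hf' : HasFDerivAt f f' (line 0)).comp_hasDerivAt 0 hl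
  have hslope := (hf.comp_affineMap line).le_slope_of_hasDerivAt (by simpa [hline] using hx)
    (by simpa [hline] using hy) one_pos hderiv
  simp only [slope_def_field, Function.comp_apply, hline, one_smul, zero_smul, zero_add,
    sub_add_cancel, sub_zero, div_one] at hslope
  linarith

theorem fderiv_apply_eq_sum_pderiv' {n : ℕ} (f : (Fin n → ℝ) → ℝ) (x v : Fin n → ℝ) :
    fderiv ℝ f x v = ∑ i, pderiv' f i x * v i := by
  conv_lhs => rw [← univ_sum_single v, map_sum]
  refine sum_congr rfl fun i _ => ?_
  rw [pderiv', mul_comm, ← smul_eq_mul, ← map_smul, ← Pi.single_smul, smul_eq_mul, mul_one]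

theorem ConvexOn.sub_le_sum_pderiv'_mul {n : ℕ} {f : (Fin n → ℝ) → ℝ}
    (hf : ConvexOn ℝ Set.univ f) {x : Fin n → ℝ} (hfx : DifferentiableAt ℝ f x)
    (y : Fin n → ℝ) :
    f x - f y ≤ ∑ i, pderiv' f i x * (x i - y i) := by
  have h := hf.add_fderiv_sub_le (Set.mem_univ x) (Set.mem_univ y) hfx.hasFDerivAt
  rw [← neg_sub x y, map_neg, fderiv_apply_eq_sum_pderiv'] at h
  simp only [Pi.sub_apply] at h
  linarith

theorem ConvexOn.mul_sub_le_sum_mul_pderiv'_mul {n : ℕ} {f : (Fin n → ℝ) → ℝ}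
    (hf : ConvexOn ℝ Set.univ f) {x : Fin n → ℝ} (hfx : DifferentiableAt ℝ f x)
    {y η : Fin n → ℝ} {a : ℝ} (ha : 0 ≤ a) (hη : ∀ i, a ≤ η i)
    (halign : ∀ i, 0 ≤ pderiv' f i x * (x i - y i)) :
    a * (f x - f y) ≤ ∑ i, η i * (pderiv' f i x * (x i - y i)) :=
  calc a * (f x - f y) ≤ a * ∑ i, pderiv' f i x * (x i - y i) :=
        mul_le_mul_of_nonneg_left (hf.sub_le_sum_pderiv'_mul hfx y) ha
    _ = ∑ i, a * (pderiv' f i x * (x i - y i)) := mul_sum _ _ _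
    _ ≤ ∑ i, η i * (pderiv' f i x * (x i - y i)) :=
        sum_le_sum fun i _ => mul_le_mul_of_nonneg_right (hη i) (halign i)

theorem sum_sub_mul_sub_sq {ι : Type*} [Fintype ι] (x y η g : ι → ℝ) :
    ∑ i, (x i - η i * g i - y i) ^ 2
      = ∑ i, (x i - y i) ^ 2 - 2 * ∑ i, η i * (g i * (x i - y i)) + ∑ i, η i ^ 2 * g i ^ 2 := by
  rw [mul_sum, ← sum_sub_distrib, ← sum_add_distrib]
  exact sum_congr rfl fun i _ => by ring

theorem memLp_two_apply_of_integrable_sum_sq {ι Ω : Type*} [Fintype ι] {m0 : MeasurableSpace Ω}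
    {μ : Measure Ω} {X : Ω → ι → ℝ} (hX : AEStronglyMeasurable X μ)
    (h : Integrable (fun ω => ∑ i, X ω i ^ 2) μ) (i : ι) :
    MemLp (fun ω => X ω i) 2 μ := by
  have hXi : AEStronglyMeasurable (fun ω => X ω i) μ :=
    (continuous_apply i).comp_aestronglyMeasurable hX
  refine (memLp_two_iff_integrable_sq hXi).mpr (h.mono' (hXi.pow 2) (ae_of_all _ fun ω => ?_))
  rw [Real.norm_of_nonneg (sq_nonneg _)]
  exact single_le_sum (f := fun j => X ω j ^ 2) (fun j _ => sq_nonneg _) (mem_univ i)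

section

variable {n : ℕ} {Ω : Type*} {m m0 : MeasurableSpace Ω} {μ : Measure Ω}
  {f : (Fin n → ℝ) → ℝ} {x g : Ω → Fin n → ℝ} {y η : Fin n → ℝ}

theorem condExp_mul_sub_ae_eq_pderiv'_mul_sub [IsFiniteMeasure μ] (hx : StronglyMeasurable[m] x)
    (hxy : ∀ i, MemLp (fun ω => x ω i - y i) 2 μ) (hg : MemLp g 2 μ)
    (hunb : μ[g|m] =ᵐ[μ] fun ω i => pderiv' f i (x ω)) (i : Fin n) :
    μ[fun ω => g ω i * (x ω i - y i)|m] =ᵐ[μ] fun ω => pderiv' f i (x ω) * (x ω i - y i) := by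
  have hcoord : μ[fun ω => g ω i|m] =ᵐ[μ] fun ω => pderiv' f i (x ω) := by
    refine ((ContinuousLinearMap.proj i).comp_condExp_comm
      (hg.integrable one_le_two)).symm.trans ?_
    filter_upwards [hunb] with ω hω
    exact congrFun hω i
  have hxym : StronglyMeasurable[m] fun ω => x ω i - y i :=
    ((continuous_apply i).comp_stronglyMeasurable hx).sub stronglyMeasurable_const
  refine (condExp_mul_of_stronglyMeasurable_right hxym
    ((hg.eval i).integrable_mul (hxy i)) ((hg.eval i).integrable one_le_two)).trans ?_
  filter_upwards [hcoord] with ω hω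
  simp only [Pi.mul_apply, hω]

theorem mul_integral_sub_le_integral_sum_mul_mul_sub [IsFiniteMeasure μ] (hm : m ≤ m0)
    (hf : ConvexOn ℝ Set.univ f) (hdiff : Differentiable ℝ f) (hx : StronglyMeasurable[m] x)
    (hxy : ∀ i, MemLp (fun ω => x ω i - y i) 2 μ) (hg : MemLp g 2 μ)
    (hunb : μ[g|m] =ᵐ[μ] fun ω i => pderiv' f i (x ω))
    (halign : ∀ᵐ ω ∂μ, ∀ i, 0 ≤ pderiv' f i (x ω) * (x ω i - y i))
    (hfx : Integrable (fun ω => f (x ω)) μ) {a : ℝ} (ha : 0 ≤ a) (hη : ∀ i, a ≤ η i) :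
    a * ∫ ω, (f (x ω) - f y) ∂μ ≤ ∫ ω, ∑ i, η i * (g ω i * (x ω i - y i)) ∂μ := by
  have hpull := condExp_mul_sub_ae_eq_pderiv'_mul_sub hx hxy hg hunb
  have hgxy : ∀ i, Integrable (fun ω => g ω i * (x ω i - y i)) μ :=
    fun i => (hg.eval i).integrable_mul (hxy i)
  have hint : ∀ i, Integrable (fun ω => pderiv' f i (x ω) * (x ω i - y i)) μ :=
    fun i => integrable_condExp.congr (hpull i)
  have htower : ∀ i, ∫ ω, g ω i * (x ω i - y i) ∂μ
      = ∫ ω, pderiv' f i (x ω) * (x ω i - y i) ∂μ :=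
    fun i => (integral_condExp hm).symm.trans (integral_congr_ae (hpull i))
  calc a * ∫ ω, (f (x ω) - f y) ∂μ = ∫ ω, a * (f (x ω) - f y) ∂μ :=
        (integral_const_mul _ _).symm
    _ ≤ ∫ ω, ∑ i, η i * (pderiv' f i (x ω) * (x ω i - y i)) ∂μ := by
        refine integral_mono_ae ((hfx.sub (integrable_const _)).const_mul a)
          (integrable_finsetSum _ fun i _ => (hint i).const_mul _) ?_
        filter_upwards [halign] with ω hω
        exact hf.mul_sub_le_sum_mul_pderiv'_mul (hdiff _) ha hη hω
    _ = ∫ ω, ∑ i, η i * (g ω i * (x ω i - y i)) ∂μ := by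
        rw [integral_finsetSum _ fun i _ => (hint i).const_mul _,
          integral_finsetSum _ fun i _ => (hgxy i).const_mul _]
        simp only [integral_const_mul, htower]

theorem integral_sum_sq_sub_mul_sub_le [IsFiniteMeasure μ] (hm : m ≤ m0)
    (hf : ConvexOn ℝ Set.univ f) (hdiff : Differentiable ℝ f) (hx : StronglyMeasurable[m] x)
    (hg : MemLp g 2 μ) (hunb : μ[g|m] =ᵐ[μ] fun ω i => pderiv' f i (x ω))
    (halign : ∀ᵐ ω ∂μ, ∀ i, 0 ≤ pderiv' f i (x ω) * (x ω i - y i))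
    (hfx : Integrable (fun ω => f (x ω)) μ) (hx2 : Integrable (fun ω => ∑ i, (x ω i - y i) ^ 2) μ)
    {a b C : ℝ} (ha : 0 ≤ a) (hηa : ∀ i, a ≤ η i) (hηb : ∀ i, η i ≤ b)
    (hC : ∫ ω, ∑ i, g ω i ^ 2 ∂μ ≤ C) :
    ∫ ω, ∑ i, (x ω i - η i * g ω i - y i) ^ 2 ∂μ
      ≤ ∫ ω, ∑ i, (x ω i - y i) ^ 2 ∂μ - 2 * a * ∫ ω, (f (x ω) - f y) ∂μ + C * b ^ 2 := by
  have hxy : ∀ i, MemLp (fun ω => x ω i - y i) 2 μ :=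
    memLp_two_apply_of_integrable_sum_sq (X := fun ω => x ω - y)
      ((hx.mono hm).aestronglyMeasurable.sub aestronglyMeasurable_const) hx2
  have hcross : Integrable (fun ω => 2 * ∑ i, η i * (g ω i * (x ω i - y i))) μ :=
    (integrable_finsetSum _ fun i _ =>
      ((hg.eval i).integrable_mul (hxy i)).const_mul (η i)).const_mul 2
  have hsq : ∀ i, Integrable (fun ω => g ω i ^ 2) μ := fun i => (hg.eval i).integrable_sq
  have hquadint : Integrable (fun ω => ∑ i, η i ^ 2 * g ω i ^ 2) μ :=
    integrable_finsetSum _ fun i _ => (hsq i).const_mul _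
  have hquad : ∫ ω, ∑ i, η i ^ 2 * g ω i ^ 2 ∂μ ≤ C * b ^ 2 :=
    calc ∫ ω, ∑ i, η i ^ 2 * g ω i ^ 2 ∂μ ≤ ∫ ω, b ^ 2 * ∑ i, g ω i ^ 2 ∂μ := by
          refine integral_mono hquadint
            ((integrable_finsetSum _ fun i _ => hsq i).const_mul _) fun ω => ?_
          rw [mul_sum]
          refine sum_le_sum fun i _ => mul_le_mul_of_nonneg_right ?_ (sq_nonneg _)
          exact pow_le_pow_left₀ (ha.trans (hηa i)) (hηb i) 2
      _ ≤ C * b ^ 2 := by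
          rw [integral_const_mul, mul_comm C]
          exact mul_le_mul_of_nonneg_left hC (sq_nonneg b)
  have hcrossle := mul_integral_sub_le_integral_sum_mul_mul_sub hm hf hdiff hx hxy hg hunb
    halign hfx ha hηa
  simp_rw [sum_sub_mul_sub_sq]
  rw [integral_add (hx2.sub hcross : Integrable (fun ω => _ - _) μ) hquadint,
    integral_sub hx2 hcross, integral_const_mul]
  linarith

end

theorem inf'_range_le_div_of_le_sub_mul_add {D F a b : ℕ → ℝ} {T : ℕ} (hT : (range T).Nonempty)
    (ha : ∀ t < T, 0 < a t) (hstep : ∀ t < T, D (t + 1) ≤ D t - a t * F t + b t)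
    (hDT : 0 ≤ D T) :
    (range T).inf' hT F ≤ (D 0 + ∑ t ∈ range T, b t) / ∑ t ∈ range T, a t := by
  have htelescope : ∀ N ≤ T, D N + ∑ t ∈ range N, a t * F t ≤ D 0 + ∑ t ∈ range N, b t := by
    intro N
    induction N with
    | zero => simp
    | succ N ih =>
      intro hN
      rw [sum_range_succ, sum_range_succ]
      linarith [ih (by omega), hstep N (by omega)]
  rw [le_div_iff₀ (sum_pos (fun t ht => ha t (mem_range.mp ht)) hT), mul_sum]
  calc ∑ t ∈ range T, (range T).inf' hT F * a t ≤ ∑ t ∈ range T, a t * F t :=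
        sum_le_sum fun t ht => by
          rw [mul_comm]
          exact mul_le_mul_of_nonneg_left (inf'_le F ht) (ha t (mem_range.mp ht)).le
    _ ≤ D 0 + ∑ t ∈ range T, b t := by linarith [htelescope T le_rfl]

/-- Proposition 2 (convex case): for the stochastic MTSL iteration
`θ(t+1) = θ(t) − η(t) ⊙ g̃(t)` on a convex differentiable `f` with global minimizer `θ*`,
deterministic initial point, unbiased gradient estimates, second-moment bound
`E‖g̃(t)‖² ≤ G²`, and the coordinatewise alignment condition, the best iterate satisfies
`min_{0 ≤ t ≤ T−1} E[f(θ(t)) − f(θ*)]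
  ≤ (‖θ(0) − θ*‖² + G² Σ_{t<T} η_max(t)²) / (2 Σ_{t<T} η_min(t))`. -/
theorem mtsl_sgd_convex_rate {n : ℕ} [NeZero n] {Ω : Type*} {m0 : MeasurableSpace Ω}
    (μ : Measure Ω) [IsProbabilityMeasure μ]
    (𝓕 : Filtration ℕ m0)
    (f : (Fin n → ℝ) → ℝ)
    (hconv : ConvexOn ℝ Set.univ f) (hdiff : Differentiable ℝ f)
    (θs : Fin n → ℝ)
    (η : ℕ → Fin n → ℝ) (hη : ∀ t i, 0 < η t i)
    (G : ℝ) (T : ℕ) (hT : 1 ≤ T)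
    (θ : ℕ → Ω → Fin n → ℝ) (gt : ℕ → Ω → Fin n → ℝ)
    (θinit : Fin n → ℝ) (hθ0 : ∀ ω, θ 0 ω = θinit)
    (hadapted : Adapted 𝓕 θ)
    (hupdate : ∀ t ω, θ (t + 1) ω = fun i => θ t ω i - η t i * gt t ω i)
    (hgt2 : ∀ t, MemLp (gt t) 2 μ)
    (hunbiased : ∀ t < T, μ[gt t | 𝓕 t] =ᵐ[μ] fun ω => fun i => pderiv' f i (θ t ω))
    (hG : ∀ t < T, ∫ ω, ∑ i, (gt t ω i) ^ 2 ∂μ ≤ G ^ 2)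
    (halign : ∀ t < T, ∀ᵐ ω ∂μ, ∀ i, 0 ≤ pderiv' f i (θ t ω) * (θ t ω i - θs i))
    (hfint : ∀ t, Integrable (fun ω => f (θ t ω)) μ)
    (hθint : ∀ t, Integrable (fun ω => ∑ i, (θ t ω i - θs i) ^ 2) μ) :
    (Finset.range T).inf' (Finset.nonempty_range_iff.mpr (by omega))
        (fun t => ∫ ω, (f (θ t ω) - f θs) ∂μ) ≤
      ((∑ i, (θinit i - θs i) ^ 2)
          + G ^ 2 * ∑ t ∈ Finset.range T, (Finset.univ.sup' Finset.univ_nonempty (η t)) ^ 2)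
        / (2 * ∑ t ∈ Finset.range T, Finset.univ.inf' Finset.univ_nonempty (η t)) := by
  set ηmin := fun t => univ.inf' univ_nonempty (η t)
  set ηmax := fun t => univ.sup' univ_nonempty (η t)
  have hηmin : ∀ t, 0 < ηmin t := fun t => (lt_inf'_iff _).mpr fun i _ => hη t i
  have hstep : ∀ t < T, ∫ ω, ∑ i, (θ (t + 1) ω i - θs i) ^ 2 ∂μ
      ≤ ∫ ω, ∑ i, (θ t ω i - θs i) ^ 2 ∂μ - 2 * ηmin t * ∫ ω, (f (θ t ω) - f θs) ∂μ
        + G ^ 2 * ηmax t ^ 2 := fun t ht => by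
    simpa only [hupdate] using integral_sum_sq_sub_mul_sub_le (𝓕.le t) hconv hdiff
      (hadapted t).stronglyMeasurable (hgt2 t) (hunbiased t ht) (halign t ht) (hfint t)
      (hθint t) (hηmin t).le
      (fun i => inf'_le _ (mem_univ i)) (fun i => le_sup' _ (mem_univ i)) (hG t ht)
  have hrate := inf'_range_le_div_of_le_sub_mul_add
    (D := fun t => ∫ ω, ∑ i, (θ t ω i - θs i) ^ 2 ∂μ) (nonempty_range_iff.mpr (by omega : T ≠ 0))
    (fun t _ => mul_pos two_pos (hηmin t)) hstep
    (integral_nonneg fun ω => sum_nonneg fun i _ => sq_nonneg (θ T ω i - θs i))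
  simpa [hθ0, ← mul_sum] using hrate
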